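/- Under the gaps-and-weight setup, fix an index k ∈ {1, …, n} such that G_k is nonempty. Then there exists a real polynomial p of degree at most n − 1 such that I_l(p) = δ_{kl} for every l = 1, …, n, i.e. the signed integrals of p(t)/w(t) over the pieces of G_l vanish for all l ≠ k and equal 1 for l = k. -/

import Mathlib

open Finset

/-- The weight `w(t) = √(−∏_{i=0}^{2n}(t − bᵢ))` on the gaps of the hyperelliptic curve. -/
noncomputable def gapWeight (n : ℕ) (b : Fin (2 * n + 1) → ℝ) (t : ℝ) : ℝ :=
  Real.sqrt (-∏ i, (t - b i))

/-- The signed integral `I_j(f) = ε_j · Σ_{(c,d) ∈ G_j} ∫_c^d f(t)/w(t) dt` over the pieces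
of the collection of paths `G_j` lying in gap `j`. -/
noncomputable def gapIntegral (n : ℕ) (b : Fin (2 * n + 1) → ℝ) (ε : Fin n → ℝ)
    (G : Fin n → List (ℝ × ℝ)) (j : Fin n) (f : ℝ → ℝ) : ℝ :=
  ε j * ((G j).map fun pr => ∫ t in pr.1..pr.2, f t / gapWeight n b t).sum


/-!
The map `p ↦ (I_l(p))_l` from polynomials of degree `< n` to `ℝⁿ` is injective when every `G_l`
is nonempty: the weight `w` is positive inside the gaps, so if `p` kept a strict sign on gap `l`
all pieces of `I_l(p)` would share that sign and `I_l(p) ≠ 0`; hence `I_l(p) = 0` forces a root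
of `p` in each of the `n` disjoint gaps, so `p = 0`. By dimension count the map is then onto.
The integrals exist because `w` vanishes only like a square root at the ends of a gap.
-/

open MeasureTheory Polynomial

theorem intervalIntegrable_div_sqrt_sub_left {g : ℝ → ℝ} {a s : ℝ} (has : a ≤ s)
    (hg : ContinuousOn g (Set.Icc a s)) :
    IntervalIntegrable (fun t => g t / √(t - a)) volume a s := by
  have hpow : IntervalIntegrable (fun t => (t - a) ^ (-(1 / 2) : ℝ)) volume a s := by
    simpa using (intervalIntegral.intervalIntegrable_rpow' (a := 0) (b := s - a)
      (r := -(1 / 2)) (by norm_num)).comp_sub_right a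
  refine (hpow.continuousOn_mul (by rwa [Set.uIcc_of_le has])).congr fun t ht => ?_
  rw [Set.uIoc_of_le has] at ht
  rw [Real.sqrt_eq_rpow, Real.rpow_neg (by linarith [ht.1])]; ring

theorem intervalIntegrable_div_sqrt_sub_right {g : ℝ → ℝ} {s d : ℝ} (hsd : s ≤ d)
    (hg : ContinuousOn g (Set.Icc s d)) :
    IntervalIntegrable (fun t => g t / √(d - t)) volume s d := by
  have hrefl := intervalIntegrable_div_sqrt_sub_left (g := fun u => g (-u)) (neg_le_neg hsd)
    (hg.comp continuousOn_neg fun u hu => ⟨by linarith [hu.2], by linarith [hu.1]⟩)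
  simpa [neg_add_eq_sub] using ((IntervalIntegrable.iff_comp_neg).mp hrefl).symm

theorem intervalIntegrable_div_sqrt_mul_sub_mul {p q : ℝ → ℝ} {a d : ℝ} (had : a < d)
    (hp : ContinuousOn p (Set.Icc a d)) (hq : ContinuousOn q (Set.Icc a d))
    (hq0 : ∀ t ∈ Set.Icc a d, 0 < q t) :
    IntervalIntegrable (fun t => p t / √((t - a) * (d - t) * q t)) volume a d := by
  obtain ⟨s, has, hsd⟩ := exists_between had
  have hleft : IntervalIntegrable (fun t => p t / √((d - t) * q t) / √(t - a)) volume a s := by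
    refine intervalIntegrable_div_sqrt_sub_left has.le ((hp.mono ?_).div ?_ fun t ht => ?_)
    · exact Set.Icc_subset_Icc_right hsd.le
    · exact (((continuousOn_const.sub continuousOn_id).mul hq).sqrt).mono
        (Set.Icc_subset_Icc_right hsd.le)
    · have := hq0 t ⟨ht.1, ht.2.trans hsd.le⟩
      exact (Real.sqrt_pos.2 (mul_pos (by linarith [ht.2]) this)).ne'
  have hright : IntervalIntegrable (fun t => p t / √((t - a) * q t) / √(d - t)) volume s d := by
    refine intervalIntegrable_div_sqrt_sub_right hsd.le ((hp.mono ?_).div ?_ fun t ht => ?_)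
    · exact Set.Icc_subset_Icc_left has.le
    · exact (((continuousOn_id.sub continuousOn_const).mul hq).sqrt).mono
        (Set.Icc_subset_Icc_left has.le)
    · have := hq0 t ⟨has.le.trans ht.1, ht.2⟩
      exact (Real.sqrt_pos.2 (mul_pos (by linarith [ht.1]) this)).ne'
  refine (hleft.congr fun t ht => ?_).trans (hright.congr fun t ht => ?_)
  · rw [Set.uIoc_of_le has.le] at ht
    have := hq0 t ⟨ht.1.le, ht.2.trans hsd.le⟩
    rw [div_div, ← Real.sqrt_mul (mul_nonneg (by linarith [ht.2]) this.le)]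
    ring_nf
  · rw [Set.uIoc_of_le hsd.le] at ht
    have := hq0 t ⟨has.le.trans ht.1.le, ht.2⟩
    rw [div_div, ← Real.sqrt_mul (mul_nonneg (by linarith [ht.1]) this.le)]
    ring_nf

theorem IsPreconnected.forall_pos_or_forall_neg {s : Set ℝ} {f : ℝ → ℝ} (hs : IsPreconnected s)
    (hf : ContinuousOn f s) (hf0 : ∀ t ∈ s, f t ≠ 0) :
    (∀ t ∈ s, 0 < f t) ∨ ∀ t ∈ s, f t < 0 := by
  by_contra! ⟨⟨t₁, ht₁, hf₁⟩, t₂, ht₂, hf₂⟩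
  obtain ⟨t, ht, hft⟩ := hs.intermediate_value ht₁ ht₂ hf ⟨hf₁, hf₂⟩
  exact hf0 t ht hft

theorem sum_map_intervalIntegral_pos {f : ℝ → ℝ} {a d : ℝ} {L : List (ℝ × ℝ)} (hL : L ≠ [])
    (hL_sub : ∀ pr ∈ L, a ≤ pr.1 ∧ pr.1 < pr.2 ∧ pr.2 ≤ d)
    (hf_int : ∀ pr ∈ L, IntervalIntegrable f volume pr.1 pr.2)
    (hf : ∀ t ∈ Set.Ioo a d, 0 < f t) :
    0 < (L.map fun pr => ∫ t in pr.1..pr.2, f t).sum := by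
  refine List.sum_pos _ (fun x hx => ?_) (by simpa using hL)
  obtain ⟨pr, hpr, rfl⟩ := List.mem_map.1 hx
  obtain ⟨hapr, hpr12, hprd⟩ := hL_sub pr hpr
  exact intervalIntegral.intervalIntegral_pos_of_pos_on (hf_int pr hpr)
    (fun t ht => hf t ⟨hapr.trans_lt ht.1, ht.2.trans_le hprd⟩) hpr12

theorem sum_map_intervalIntegral_ne_zero {f : ℝ → ℝ} {a d : ℝ} {L : List (ℝ × ℝ)} (hL : L ≠ [])
    (hL_sub : ∀ pr ∈ L, a ≤ pr.1 ∧ pr.1 < pr.2 ∧ pr.2 ≤ d)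
    (hf_int : ∀ pr ∈ L, IntervalIntegrable f volume pr.1 pr.2)
    (hf : ContinuousOn f (Set.Ioo a d)) (hf0 : ∀ t ∈ Set.Ioo a d, f t ≠ 0) :
    (L.map fun pr => ∫ t in pr.1..pr.2, f t).sum ≠ 0 := by
  rcases isPreconnected_Ioo.forall_pos_or_forall_neg hf hf0 with hpos | hneg
  · exact (sum_map_intervalIntegral_pos hL hL_sub hf_int hpos).ne'
  · have := sum_map_intervalIntegral_pos (f := fun t => -f t) hL hL_sub
      (fun pr hpr => (hf_int pr hpr).neg) fun t ht => neg_pos.2 (hneg t ht)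
    simp only [intervalIntegral.integral_neg] at this
    have hsum := L.sum_map_mul_left (fun pr => ∫ t in pr.1..pr.2, f t) (-1)
    simp only [neg_one_mul] at hsum
    exact (neg_pos.1 (hsum ▸ this)).ne

theorem Finset.prod_pos_of_even_card_filter_neg {ι R : Type*} [CommRing R] [LinearOrder R]
    [IsStrictOrderedRing R] {s : Finset ι} {f : ι → R}
    (hf0 : ∀ i ∈ s, f i ≠ 0) (heven : Even #{i ∈ s | f i < 0}) : 0 < ∏ i ∈ s, f i := by
  rw [← prod_filter_mul_prod_filter_not s (fun i => f i < 0)]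
  refine mul_pos ?_ (prod_pos fun i hi => ?_)
  · rw [← one_mul (∏ i ∈ _, f i), ← heven.neg_one_pow, ← prod_neg]
    exact prod_pos fun i hi => neg_pos.2 (mem_filter.1 hi).2
  · rw [mem_filter, not_lt] at hi
    exact hi.2.lt_of_ne' (hf0 i hi.1)

section Gaps

variable {n : ℕ}

def gapLeft (j : Fin n) : Fin (2 * n + 1) :=
  ⟨2 * j + 1, Nat.succ_lt_succ (Nat.mul_lt_mul_of_pos_left j.isLt two_pos)⟩

def gapRight (j : Fin n) : Fin (2 * n + 1) :=
  ⟨2 * j + 2, Nat.lt_succ_of_le (Nat.mul_le_mul_left 2 j.isLt)⟩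

theorem gapLeft_lt_gapRight (j : Fin n) : gapLeft j < gapRight j := by
  simp [gapLeft, gapRight, Fin.lt_def]

theorem gapRight_le_gapLeft {j l : Fin n} (hjl : j < l) : gapRight j ≤ gapLeft l := by
  simp only [gapLeft, gapRight, Fin.le_def]
  omega

theorem lt_gapLeft_or_gapRight_lt {j : Fin n} {i : Fin (2 * n + 1)}
    (hi : i ∉ ({gapLeft j, gapRight j} : Finset _)) : i < gapLeft j ∨ gapRight j < i := by
  simp only [mem_insert, mem_singleton, not_or, gapLeft, gapRight, Fin.ext_iff, Fin.lt_def] at hi ⊢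
  omega

variable {b : Fin (2 * n + 1) → ℝ}

def gapCofactor (b : Fin (2 * n + 1) → ℝ) (j : Fin n) (t : ℝ) : ℝ :=
  ∏ i ∈ ({gapLeft j, gapRight j} : Finset _)ᶜ, (t - b i)

theorem continuous_gapCofactor (j : Fin n) : Continuous (gapCofactor b j) := by
  unfold gapCofactor
  fun_prop

theorem neg_prod_sub_eq_mul_gapCofactor (j : Fin n) (t : ℝ) :
    -∏ i, (t - b i) = (t - b (gapLeft j)) * (b (gapRight j) - t) * gapCofactor b j t := by
  rw [← prod_compl_mul_prod {gapLeft j, gapRight j}, prod_pair (gapLeft_lt_gapRight j).ne,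
    gapCofactor]
  ring

theorem gapCofactor_pos (hb : StrictMono b) {j : Fin n} {t : ℝ}
    (ht : t ∈ Set.Icc (b (gapLeft j)) (b (gapRight j))) : 0 < gapCofactor b j t := by
  have hsign : ∀ i ∈ ({gapLeft j, gapRight j} : Finset _)ᶜ,
      (t - b i < 0 ↔ gapRight j < i) ∧ t - b i ≠ 0 := by
    intro i hi
    rcases lt_gapLeft_or_gapRight_lt (mem_compl.1 hi) with hij | hji
    · have := hb hij
      exact ⟨iff_of_false (by linarith [ht.1]) (hij.trans (gapLeft_lt_gapRight j)).not_gt,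
        by linarith [ht.1]⟩
    · have := hb hji
      exact ⟨iff_of_true (by linarith [ht.2]) hji, by linarith [ht.2]⟩
  refine prod_pos_of_even_card_filter_neg (fun i hi => (hsign i hi).2) ?_
  have hneg : {i ∈ ({gapLeft j, gapRight j} : Finset _)ᶜ | t - b i < 0} = Ioi (gapRight j) := by
    ext i
    rw [mem_filter, mem_Ioi]
    refine ⟨fun h => (hsign i h.1).1.1 h.2, fun h => ?_⟩
    have hi : i ∈ ({gapLeft j, gapRight j} : Finset _)ᶜ := by
      simp [h.ne', ((gapLeft_lt_gapRight j).trans h).ne']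
    exact ⟨hi, (hsign i hi).1.2 h⟩
  rw [hneg, Fin.card_Ioi]
  exact ⟨n - j - 1, by simp only [gapRight]; omega⟩

theorem gapWeight_eq (j : Fin n) (t : ℝ) :
    gapWeight n b t = √((t - b (gapLeft j)) * (b (gapRight j) - t) * gapCofactor b j t) := by
  rw [gapWeight, neg_prod_sub_eq_mul_gapCofactor j]

theorem continuous_gapWeight : Continuous (gapWeight n b) := by
  unfold gapWeight
  fun_prop

theorem gapWeight_pos (hb : StrictMono b) {j : Fin n} {t : ℝ}
    (ht : t ∈ Set.Ioo (b (gapLeft j)) (b (gapRight j))) : 0 < gapWeight n b t := by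
  rw [gapWeight_eq j]
  have := gapCofactor_pos hb (Set.Ioo_subset_Icc_self ht)
  exact Real.sqrt_pos.2 (mul_pos (mul_pos (by linarith [ht.1]) (by linarith [ht.2])) this)

theorem intervalIntegrable_div_gapWeight (hb : StrictMono b) {j : Fin n} {p : ℝ → ℝ}
    (hp : Continuous p) {c d : ℝ} (hc : b (gapLeft j) ≤ c) (hcd : c ≤ d) (hd : d ≤ b (gapRight j)) :
    IntervalIntegrable (fun t => p t / gapWeight n b t) volume c d := by
  have hgap := intervalIntegrable_div_sqrt_mul_sub_mul (hb (gapLeft_lt_gapRight j))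
    hp.continuousOn (continuous_gapCofactor j).continuousOn fun t ht => gapCofactor_pos hb ht
  simp only [← gapWeight_eq] at hgap
  refine hgap.mono_set ?_
  rw [Set.uIcc_of_le hcd, Set.uIcc_of_le (hb (gapLeft_lt_gapRight j)).le]
  exact Set.Icc_subset_Icc hc hd

end Gaps

section GapIntegral

variable {n : ℕ} {b : Fin (2 * n + 1) → ℝ} {ε : Fin n → ℝ} {G : Fin n → List (ℝ × ℝ)}

theorem gapIntegral_add {j : Fin n} {f g : ℝ → ℝ}
    (hf : ∀ pr ∈ G j, IntervalIntegrable (fun t => f t / gapWeight n b t) volume pr.1 pr.2)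
    (hg : ∀ pr ∈ G j, IntervalIntegrable (fun t => g t / gapWeight n b t) volume pr.1 pr.2) :
    gapIntegral n b ε G j (fun t => f t + g t) =
      gapIntegral n b ε G j f + gapIntegral n b ε G j g := by
  simp only [gapIntegral, add_div]
  rw [List.map_congr_left fun pr hpr => intervalIntegral.integral_add (hf pr hpr) (hg pr hpr),
    List.sum_map_add, mul_add]

theorem gapIntegral_const_mul (j : Fin n) (c : ℝ) (f : ℝ → ℝ) :
    gapIntegral n b ε G j (fun t => c * f t) = c * gapIntegral n b ε G j f := by
  simp only [gapIntegral, mul_div_assoc, intervalIntegral.integral_const_mul,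
    List.sum_map_mul_left]
  ring

theorem exists_root_of_gapIntegral_eq_zero (hb : StrictMono b) {j : Fin n} (hεj : ε j ≠ 0)
    (hG : ∀ pr ∈ G j, b (gapLeft j) ≤ pr.1 ∧ pr.1 < pr.2 ∧ pr.2 ≤ b (gapRight j))
    (hne : G j ≠ []) {p : ℝ[X]} (hp : gapIntegral n b ε G j (fun t => p.eval t) = 0) :
    ∃ r ∈ Set.Ioo (b (gapLeft j)) (b (gapRight j)), p.eval r = 0 := by
  by_contra! hroot
  refine mul_ne_zero hεj (sum_map_intervalIntegral_ne_zero hne hG (fun pr hpr => ?_) ?_ ?_) hp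
  · obtain ⟨h1, h12, h2⟩ := hG pr hpr
    exact intervalIntegrable_div_gapWeight hb p.continuous h1 h12.le h2
  · exact p.continuous.continuousOn.div continuous_gapWeight.continuousOn
      fun t ht => (gapWeight_pos hb ht).ne'
  · exact fun t ht => div_ne_zero (hroot t ht) (gapWeight_pos hb ht).ne'

theorem exists_mem_degreeLT_gapIntegral_eq (hb : StrictMono b) (hε : ∀ j, ε j ≠ 0)
    (hG : ∀ j, ∀ pr ∈ G j, b (gapLeft j) ≤ pr.1 ∧ pr.1 < pr.2 ∧ pr.2 ≤ b (gapRight j))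
    (hne : ∀ j, G j ≠ []) (v : Fin n → ℝ) :
    ∃ p ∈ degreeLT ℝ n, ∀ l, gapIntegral n b ε G l (fun t => p.eval t) = v l := by
  have hint : ∀ (p : ℝ[X]) j, ∀ pr ∈ G j,
      IntervalIntegrable (fun t => p.eval t / gapWeight n b t) volume pr.1 pr.2 :=
    fun p j pr hpr => intervalIntegrable_div_gapWeight hb p.continuous (hG j pr hpr).1
      (hG j pr hpr).2.1.le (hG j pr hpr).2.2
  let Φ : degreeLT ℝ n →ₗ[ℝ] Fin n → ℝ :=
    { toFun := fun p l => gapIntegral n b ε G l (fun t => (p : ℝ[X]).eval t)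
      map_add' := fun p q => funext fun l => by
        simpa only [Submodule.coe_add, eval_add, Pi.add_apply] using
          gapIntegral_add (hint p l) (hint q l)
      map_smul' := fun c p => funext fun l => by
        simpa only [SetLike.val_smul, eval_smul, smul_eq_mul, Pi.smul_apply, RingHom.id_apply] using
          gapIntegral_const_mul l c fun t => (p : ℝ[X]).eval t }
  have hΦ : Function.Injective Φ := by
    refine (injective_iff_map_eq_zero Φ).2 fun p hp => ?_
    choose r hr hroot using fun l =>
      exists_root_of_gapIntegral_eq_zero hb (hε l) (hG l) (hne l) (congrFun hp l)
    have hr_mono : StrictMono r := fun j l hjl =>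
      (hr j).2.trans_le ((hb.monotone (gapRight_le_gapLeft hjl)).trans_lt (hr l).1).le
    refine Subtype.ext (eq_zero_of_degree_lt_of_eval_index_eq_zero univ
      hr_mono.injective.injOn ?_ fun l _ => hroot l)
    simpa using mem_degreeLT.1 p.2
  have hfinrank : Module.finrank ℝ (degreeLT ℝ n) = Module.finrank ℝ (Fin n → ℝ) :=
    (degreeLTEquiv ℝ n).finrank_eq
  obtain ⟨p, hp⟩ := (LinearMap.injective_iff_surjective_of_finrank_eq_finrank hfinrank).1 hΦ v
  exact ⟨p, p.2, congrFun hp⟩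

end GapIntegral

/-- Real-integral form of the paper's non-degeneration Lemma: if `G_k` is nonempty, there
is a polynomial `p` of degree at most `n − 1` with `I_l(p) = δ_{kl}` for all `l`. -/
theorem nondegeneration_lemma (n : ℕ)
    (b : Fin (2 * n + 1) → ℝ) (hb : StrictMono b)
    (ε : Fin n → ℝ) (hε : ∀ j, ε j = 1 ∨ ε j = -1)
    (G : Fin n → List (ℝ × ℝ))
    (hG : ∀ j : Fin n, ∀ pr ∈ G j,
      b ⟨2 * (j : ℕ) + 1, by omega⟩ ≤ pr.1 ∧ pr.1 < pr.2 ∧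
        pr.2 ≤ b ⟨2 * (j : ℕ) + 2, by omega⟩)
    (k : Fin n) (hk : G k ≠ []) :
    ∃ P : Polynomial ℝ, P.natDegree ≤ n - 1 ∧
      ∀ l : Fin n, gapIntegral n b ε G l (fun t => P.eval t) =
        if l = k then 1 else 0 := by
  -- An empty `G l` makes `I_l` vanish identically; filling it with the whole gap makes the
  -- interpolation problem square without changing the other functionals.
  let G' : Fin n → List (ℝ × ℝ) := fun l =>
    if G l = [] then [(b (gapLeft l), b (gapRight l))] else G l
  have hG' : ∀ l, ∀ pr ∈ G' l, b (gapLeft l) ≤ pr.1 ∧ pr.1 < pr.2 ∧ pr.2 ≤ b (gapRight l) := by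
    intro l pr hpr
    by_cases hl : G l = []
    · simp only [G', hl, if_true, List.mem_singleton] at hpr
      exact hpr ▸ ⟨le_rfl, hb (gapLeft_lt_gapRight l), le_rfl⟩
    · simp only [G', hl, if_false] at hpr
      exact hG l pr hpr
  have hne' : ∀ l, G' l ≠ [] := fun l => by by_cases hl : G l = [] <;> simp [G', hl]
  obtain ⟨P, hPdeg, hP⟩ := exists_mem_degreeLT_gapIntegral_eq (ε := ε) hb
    (fun j => by rcases hε j with h | h <;> simp [h]) hG' hne' fun l => if l = k then 1 else 0
  refine ⟨P, ?_, fun l => ?_⟩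
  · rcases eq_or_ne P 0 with rfl | hP0
    · simp
    · have := (natDegree_lt_iff_degree_lt hP0).2 (mem_degreeLT.1 hPdeg)
      omega
  · by_cases hl : G l = []
    · have hlk : l ≠ k := by rintro rfl; exact hk hl
      simp [gapIntegral, hl, hlk]
    · simpa [gapIntegral, G', hl] using hP l
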